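/- arXiv:1504.06757 — 3 statements merged into one kernel-verified Lean document; each statement's English description precedes it below -/
import Mathlib

section
/- In the symmetric algebra S(L(1)), for integers a, b ≥ 0 the monomial x^a y^b lies in the subspace g·S^{a+b}(L(1)) (the k-span of all u·v with u ∈ g, v ∈ S^{a+b}(L(1))) if and only if (a,b) ≠ (0,0) and it is not the case that both a ≡ −1 (mod p) and b ≡ −1 (mod p). -/
noncomputable section
open MvPolynomial

/-- `sl₂(k)`, realised as coordinate triples w.r.t. the standard basis `e, h, f`. -/
def sl2 (k : Type) [Field k] : Type := Fin 3 → k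

variable (k : Type) [Field k]

namespace sl2

instance : AddCommGroup (sl2 k) := Pi.addCommGroup
instance : Module k (sl2 k) := Pi.module _ _ _

/-- the standard basis vector `e` -/
def E : sl2 k := ![1, 0, 0]
/-- the standard basis vector `h` -/
def H : sl2 k := ![0, 1, 0]
/-- the standard basis vector `f` -/
def F : sl2 k := ![0, 0, 1]

/-- The identification of `sl₂` with coordinate triples. -/
def coordEquiv : sl2 k ≃ₗ[k] (Fin 3 → k) := LinearEquiv.refl k (sl2 k)

/-- The standard basis of `sl₂`. -/
def basis : Module.Basis (Fin 3) k (sl2 k) := Module.Basis.ofEquivFun (coordEquiv k)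

variable {k}

@[simp] lemma add_apply (u v : sl2 k) (i : Fin 3) : (u + v) i = u i + v i := rfl
@[simp] lemma smul_apply (t : k) (u : sl2 k) (i : Fin 3) : (t • u) i = t * u i := rfl
@[simp] lemma neg_apply (u : sl2 k) (i : Fin 3) : (-u) i = -(u i) := rfl
@[simp] lemma zero_apply (i : Fin 3) : (0 : sl2 k) i = 0 := rfl
@[simp] lemma E_apply₀ : E k 0 = 1 := rfl
@[simp] lemma E_apply₁ : E k 1 = 0 := rfl
@[simp] lemma E_apply₂ : E k 2 = 0 := rfl
@[simp] lemma H_apply₀ : H k 0 = 0 := rfl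
@[simp] lemma H_apply₁ : H k 1 = 1 := rfl
@[simp] lemma H_apply₂ : H k 2 = 0 := rfl
@[simp] lemma F_apply₀ : F k 0 = 0 := rfl
@[simp] lemma F_apply₁ : F k 1 = 0 := rfl
@[simp] lemma F_apply₂ : F k 2 = 1 := rfl

variable (k)

instance : LieRing (sl2 k) :=
  { (inferInstance : AddCommGroup (sl2 k)) with
    bracket := fun u v => ![2 * (u 1 * v 0 - u 0 * v 1),
                            u 0 * v 2 - u 2 * v 0,
                            2 * (u 2 * v 1 - u 1 * v 2)]
    add_lie := by
      intro u v w; funext i; fin_cases i <;>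
        · show _ = (_ : k) + _
          simp <;> ring
    lie_add := by
      intro u v w; funext i; fin_cases i <;>
        · show _ = (_ : k) + _
          simp <;> ring
    lie_self := by
      intro u; funext i; fin_cases i
      · show 2 * (u 1 * u 0 - u 0 * u 1) = (0 : sl2 k) 0; show _ = (0:k); ring
      · show u 0 * u 2 - u 2 * u 0 = (0 : sl2 k) 1; show _ = (0:k); ring
      · show 2 * (u 2 * u 1 - u 1 * u 2) = (0 : sl2 k) 2; show _ = (0:k); ring
    leibniz_lie := by
      intro u v w; funext i; fin_cases i <;>
        · show _ = (_ : k) + _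
          simp <;> ring }

variable {k}

@[simp] lemma lie_apply₀ (u v : sl2 k) : ⁅u, v⁆ 0 = 2 * (u 1 * v 0 - u 0 * v 1) := rfl
@[simp] lemma lie_apply₁ (u v : sl2 k) : ⁅u, v⁆ 1 = u 0 * v 2 - u 2 * v 0 := rfl
@[simp] lemma lie_apply₂ (u v : sl2 k) : ⁅u, v⁆ 2 = 2 * (u 2 * v 1 - u 1 * v 2) := rfl

variable (k)

instance : LieAlgebra k (sl2 k) where
  lie_smul t u v := by
    funext i; fin_cases i <;>
      · show _ = (_ : k) * _
        simp <;> ring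

lemma lie_H_E : ⁅H k, E k⁆ = (2 : k) • E k := by
  funext i; fin_cases i <;> simp
lemma lie_H_F : ⁅H k, F k⁆ = (-2 : k) • F k := by
  funext i; fin_cases i <;> simp
lemma lie_E_F : ⁅E k, F k⁆ = H k := by
  funext i; fin_cases i <;> simp

end sl2
/-- The symmetric algebra `S = k[e,h,f]` on the adjoint module, with
`X 0 = e`, `X 1 = h`, `X 2 = f`. -/
abbrev Sg (k : Type) [Field k] : Type := MvPolynomial (Fin 3) k

/-- The symmetric algebra `S(L(1)) = k[x,y]` on the natural module, with
`X 0 = x`, `X 1 = y`. -/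
abbrev Snat (k : Type) [Field k] : Type := MvPolynomial (Fin 2) k

namespace sl2

variable (k : Type) [Field k]

/-- The degree-one coordinate embedding `g → S`. -/
def toS : sl2 k →ₗ[k] Sg k where
  toFun u := u 0 • X 0 + u 1 • X 1 + u 2 • X 2
  map_add' u v := by simp only [add_apply, add_smul]; abel
  map_smul' t u := by simp only [smul_apply, RingHom.id_apply, smul_add, mul_smul]

variable {k}

lemma decomp (w : sl2 k) : w = w 0 • E k + w 1 • H k + w 2 • F k := by
  funext i; fin_cases i <;> simp

variable (k)

/-- The generators of `S` as images of the basis of `g`. -/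
def gens : Fin 3 → sl2 k := ![E k, H k, F k]

@[simp] lemma gens₀ : gens k 0 = E k := rfl
@[simp] lemma gens₁ : gens k 1 = H k := rfl
@[simp] lemma gens₂ : gens k 2 = F k := rfl

/-- The rows of the adjoint action. -/
def adjRow : sl2 k →ₗ[k] (Fin 3 → Sg k) where
  toFun u := fun j => toS k ⁅u, gens k j⁆
  map_add' u v := by funext j; simp only [add_lie, map_add]; rfl
  map_smul' t u := by funext j; simp only [smul_lie, map_smul]; rfl

/-- The action of `g` on its symmetric algebra `S`, by the derivations extending
the adjoint action. -/
def actS : sl2 k →ₗ[k] Derivation k (Sg k) (Sg k) :=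
  (MvPolynomial.mkDerivationEquiv k).toLinearMap.comp (adjRow k)

variable {k}

@[simp] lemma actS_X (u : sl2 k) (j : Fin 3) :
    actS k u (X j) = toS k ⁅u, gens k j⁆ :=
  MvPolynomial.mkDerivation_X _ _ _

lemma actS_toS (u w : sl2 k) : actS k u (toS k w) = toS k ⁅u, w⁆ := by
  have hw := decomp w
  have : toS k w = w 0 • (X 0 : Sg k) + w 1 • X 1 + w 2 • X 2 := rfl
  rw [this]
  simp only [map_add, Derivation.map_smul, actS_X, gens₀, gens₁, gens₂]
  conv_rhs => rw [hw]
  simp only [lie_add, lie_smul, map_add, map_smul]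

lemma actS_comm (u v : sl2 k) : actS k ⁅u, v⁆ = ⁅actS k u, actS k v⁆ := by
  apply MvPolynomial.derivation_ext
  intro j
  rw [Derivation.commutator_apply]
  simp only [actS_X, actS_toS]
  rw [← map_sub]
  congr 1
  rw [leibniz_lie]
  abel

instance : LieRingModule (sl2 k) (Sg k) where
  bracket u s := actS k u s
  add_lie u v s := by
    show actS k (u + v) s = actS k u s + actS k v s
    rw [map_add]; rfl
  lie_add u s t := by
    show actS k u (s + t) = actS k u s + actS k u t
    exact map_add _ _ _
  leibniz_lie u v s := by
    show actS k u (actS k v s) = actS k ⁅u, v⁆ s + actS k v (actS k u s)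
    rw [actS_comm]
    rw [Derivation.commutator_apply]
    abel

@[simp] lemma lie_Sg_def (u : sl2 k) (s : Sg k) : ⁅u, s⁆ = actS k u s := rfl

instance : LieModule k (sl2 k) (Sg k) where
  smul_lie t u s := by
    show actS k (t • u) s = t • actS k u s
    rw [map_smul]; rfl
  lie_smul t u s := by
    show actS k u (t • s) = t • actS k u s
    exact Derivation.map_smul _ _ _

lemma lie_mul_Sg (u : sl2 k) (s t : Sg k) :
    ⁅u, s * t⁆ = ⁅u, s⁆ * t + s * ⁅u, t⁆ := by
  show actS k u (s * t) = _
  rw [Derivation.leibniz]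
  simp only [smul_eq_mul, lie_Sg_def]
  ring

end sl2
namespace MvPolynomial

variable {k : Type} [Field k] {σ : Type*}

lemma Finsupp.degree_add' (a b : σ →₀ ℕ) :
    Finsupp.degree (a + b) = Finsupp.degree a + Finsupp.degree b := by
  simp only [Finsupp.degree_eq_weight_one, map_add]

/-- A derivation whose values on the variables are homogeneous of degree one
preserves homogeneity. -/
lemma isHomogeneous_mkDerivation (f : σ → MvPolynomial σ k)
    (hf : ∀ i, (f i).IsHomogeneous 1) {p : MvPolynomial σ k} {n : ℕ}
    (hp : p.IsHomogeneous n) :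
    ((MvPolynomial.mkDerivation k f) p).IsHomogeneous n := by
  rw [← p.support_sum_monomial_coeff, map_sum]
  apply IsHomogeneous.sum
  intro d hd
  rw [MvPolynomial.mkDerivation_monomial, smul_eq_C_mul]
  have h0 : (0 : ℕ) + n = n := by omega
  rw [← h0]
  apply (isHomogeneous_C _ _).mul
  rw [Finsupp.sum]
  apply IsHomogeneous.sum
  intro i hi
  have hdi : d i ≠ 0 := Finsupp.mem_support_iff.mp hi
  have hdeg : Finsupp.degree d = n := by
    rw [Finsupp.degree_eq_weight_one]
    exact hp (mem_support_iff.mp hd)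
  have hn : 1 ≤ n := by
    have := Finsupp.le_degree i d
    omega
  obtain ⟨m, rfl⟩ : ∃ m, n = m + 1 := ⟨n - 1, by omega⟩
  have h1 : (d - Finsupp.single i 1) + Finsupp.single i 1 = d :=
    tsub_add_cancel_of_le (by
      rw [Finsupp.single_le_iff]; omega)
  have h2 : Finsupp.degree (d - Finsupp.single i 1) = m := by
    have := congrArg Finsupp.degree h1
    rw [Finsupp.degree_add'] at this
    have hs : Finsupp.degree (Finsupp.single i 1) = 1 := by
      exact Finsupp.degree_single i 1
    omega
  have h3 : ((monomial (d - Finsupp.single i 1)) ((d i : k))).IsHomogeneous m :=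
    isHomogeneous_monomial _ h2
  rw [smul_eq_mul]
  exact h3.mul (hf i)

end MvPolynomial
namespace sl2

variable (k : Type) [Field k]

/-- The rows of the natural action of `sl₂` on linear forms in `x, y`:
`u · x = u₁ x + u₂ y` and `u · y = u₀ x - u₁ y`. -/
def natRow : sl2 k →ₗ[k] (Fin 2 → Snat k) where
  toFun u := ![u 1 • X 0 + u 2 • X 1, u 0 • X 0 - u 1 • X 1]
  map_add' u v := by
    funext j; fin_cases j
    · show (u + v) 1 • (X 0 : Snat k) + (u + v) 2 • X 1 =
        (u 1 • X 0 + u 2 • X 1) + (v 1 • X 0 + v 2 • X 1)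
      simp only [add_apply, add_smul]; abel
    · show (u + v) 0 • (X 0 : Snat k) - (u + v) 1 • X 1 =
        (u 0 • X 0 - u 1 • X 1) + (v 0 • X 0 - v 1 • X 1)
      simp only [add_apply, add_smul]; abel
  map_smul' t u := by
    funext j; fin_cases j
    · show (t • u) 1 • (X 0 : Snat k) + (t • u) 2 • X 1 =
        t • (u 1 • X 0 + u 2 • X 1)
      simp only [smul_apply, smul_add, mul_smul]
    · show (t • u) 0 • (X 0 : Snat k) - (t • u) 1 • X 1 =
        t • (u 0 • X 0 - u 1 • X 1)
      simp only [smul_apply, smul_sub, mul_smul]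

/-- The action of `sl₂` on the symmetric algebra of the natural module, by the
derivations extending the natural action. -/
def actP : sl2 k →ₗ[k] Derivation k (Snat k) (Snat k) :=
  (MvPolynomial.mkDerivationEquiv k).toLinearMap.comp (natRow k)

variable {k}

@[simp] lemma actP_X0 (u : sl2 k) :
    actP k u (X 0) = u 1 • (X 0 : Snat k) + u 2 • X 1 :=
  MvPolynomial.mkDerivation_X _ _ _

@[simp] lemma actP_X1 (u : sl2 k) :
    actP k u (X 1) = u 0 • (X 0 : Snat k) - u 1 • X 1 :=
  MvPolynomial.mkDerivation_X _ _ _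

lemma actP_comm (u v : sl2 k) : actP k ⁅u, v⁆ = ⁅actP k u, actP k v⁆ := by
  apply MvPolynomial.derivation_ext
  intro j
  rw [Derivation.commutator_apply]
  fin_cases j
  · show actP k ⁅u, v⁆ (X 0) = actP k u (actP k v (X 0)) - actP k v (actP k u (X 0))
    simp only [actP_X0, actP_X1, map_add, map_sub, Derivation.map_smul]
    simp only [lie_apply₀, lie_apply₁, lie_apply₂, MvPolynomial.smul_eq_C_mul,
      map_mul, map_sub, map_add, map_ofNat]
    ring
  · show actP k ⁅u, v⁆ (X 1) = actP k u (actP k v (X 1)) - actP k v (actP k u (X 1))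
    simp only [actP_X0, actP_X1, map_add, map_sub, Derivation.map_smul]
    simp only [lie_apply₀, lie_apply₁, lie_apply₂, MvPolynomial.smul_eq_C_mul,
      map_mul, map_sub, map_add, map_ofNat]
    ring

instance : LieRingModule (sl2 k) (Snat k) where
  bracket u s := actP k u s
  add_lie u v s := by
    show actP k (u + v) s = actP k u s + actP k v s
    rw [map_add]; rfl
  lie_add u s t := by
    show actP k u (s + t) = actP k u s + actP k u t
    exact map_add _ _ _
  leibniz_lie u v s := by
    show actP k u (actP k v s) = actP k ⁅u, v⁆ s + actP k v (actP k u s)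
    rw [actP_comm, Derivation.commutator_apply]
    abel

@[simp] lemma lie_Snat_def (u : sl2 k) (s : Snat k) : ⁅u, s⁆ = actP k u s := rfl

instance : LieModule k (sl2 k) (Snat k) where
  smul_lie t u s := by
    show actP k (t • u) s = t • actP k u s
    rw [map_smul]; rfl
  lie_smul t u s := by
    show actP k u (t • s) = t • actP k u s
    exact Derivation.map_smul _ _ _

lemma lie_mul_Snat (u : sl2 k) (s t : Snat k) :
    ⁅u, s * t⁆ = ⁅u, s⁆ * t + s * ⁅u, t⁆ := by
  show actP k u (s * t) = _
  rw [Derivation.leibniz]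
  simp only [smul_eq_mul, lie_Snat_def]
  ring

variable (k)

/-- The `n`-th symmetric power of the adjoint module, as a Lie submodule of `S`. -/
def SD (n : ℕ) : LieSubmodule k (sl2 k) (Sg k) :=
  { MvPolynomial.homogeneousSubmodule (Fin 3) k n with
    lie_mem := by
      intro u p hp
      have hp' : p.IsHomogeneous n := hp
      show ((MvPolynomial.mkDerivation k fun j => toS k ⁅u, gens k j⁆) p).IsHomogeneous n
      apply MvPolynomial.isHomogeneous_mkDerivation
      · intro i
        show ((toS k) ⁅u, gens k i⁆).IsHomogeneous 1
        set w := ⁅u, gens k i⁆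
        have : toS k w = w 0 • X 0 + w 1 • X 1 + w 2 • X 2 := rfl
        rw [this]
        simp only [MvPolynomial.smul_eq_C_mul]
        apply MvPolynomial.IsHomogeneous.add
        apply MvPolynomial.IsHomogeneous.add
        all_goals
          exact (MvPolynomial.isHomogeneous_X _ _).C_mul _
      · exact hp' }

/-- The `m`-th symmetric power of the natural module, as a Lie submodule of
`S(L(1))`. -/
def PD (m : ℕ) : LieSubmodule k (sl2 k) (Snat k) :=
  { MvPolynomial.homogeneousSubmodule (Fin 2) k m with
    lie_mem := by
      intro u p hp
      have hp' : p.IsHomogeneous m := hp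
      show ((MvPolynomial.mkDerivation k (natRow k u)) p).IsHomogeneous m
      apply MvPolynomial.isHomogeneous_mkDerivation
      · intro i
        fin_cases i
        · show ((u 1 • (X 0 : Snat k) + u 2 • X 1)).IsHomogeneous 1
          simp only [MvPolynomial.smul_eq_C_mul]
          exact ((MvPolynomial.isHomogeneous_X _ _).C_mul _).add
            ((MvPolynomial.isHomogeneous_X _ _).C_mul _)
        · show ((u 0 • (X 0 : Snat k) - u 1 • X 1)).IsHomogeneous 1
          rw [sub_eq_add_neg, ← neg_smul]
          simp only [MvPolynomial.smul_eq_C_mul]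
          exact ((MvPolynomial.isHomogeneous_X _ _).C_mul _).add
            ((MvPolynomial.isHomogeneous_X _ _).C_mul _)
      · exact hp' }

variable {k}

lemma mem_SD_iff {n : ℕ} {p : Sg k} : p ∈ SD k n ↔ p.IsHomogeneous n := Iff.rfl

lemma mem_PD_iff {m : ℕ} {p : Snat k} : p ∈ PD k m ↔ p.IsHomogeneous m := Iff.rfl

end sl2
namespace sl2

variable (k : Type) [Field k]

/-- The trivial Lie module structure on `k`. -/
instance : LieRingModule (sl2 k) k where
  bracket _ _ := 0
  add_lie _ _ _ := by simp
  lie_add _ _ _ := by simp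
  leibniz_lie _ _ _ := by simp

@[simp] lemma lie_triv (u : sl2 k) (a : k) : ⁅u, a⁆ = 0 := rfl

instance : LieModule k (sl2 k) k where
  smul_lie _ _ _ := by simp
  lie_smul _ _ _ := by simp

end sl2

/-- `U = U(sl₂(k))`, the universal enveloping algebra. -/
abbrev UEnv (k : Type) [Field k] : Type := UniversalEnvelopingAlgebra k (sl2 k)

section UModules

variable (k : Type) [Field k]
variable (M : Type) [AddCommGroup M] [Module k M]
  [LieRingModule (sl2 k) M] [LieModule k (sl2 k) M]

/-- The `U`-module structure on a Lie module for `sl₂(k)`. -/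
def uModule : Module (UEnv k) M :=
  Module.compHom M
    (UniversalEnvelopingAlgebra.lift k (LieModule.toEnd k (sl2 k) M)).toRingHom

/-- A Lie module for `sl₂(k)`, regarded as an object in the category of modules
over the universal enveloping algebra. -/
def uMod : ModuleCat (UEnv k) :=
  letI := uModule k M
  ModuleCat.of (UEnv k) M

variable {k M}

lemma uSmul_def (a : UEnv k) (m : M) :
    letI := uModule k M
    a • m = UniversalEnvelopingAlgebra.lift k (LieModule.toEnd k (sl2 k) M) a m := rfl

lemma uSmul_iota (x : sl2 k) (m : M) :
    letI := uModule k M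
    (UniversalEnvelopingAlgebra.ι k x : UEnv k) • m = ⁅x, m⁆ := by
  letI := uModule k M
  rw [uSmul_def, UniversalEnvelopingAlgebra.lift_ι_apply]
  rfl

variable {N : Type} [AddCommGroup N] [Module k N]
  [LieRingModule (sl2 k) N] [LieModule k (sl2 k) N]

lemma uSmul_map (f : M →ₗ[k] N) (hf : ∀ (u : sl2 k) (m : M), f ⁅u, m⁆ = ⁅u, f m⁆)
    (a : UEnv k) (m : M) :
    letI := uModule k M
    letI := uModule k N
    f (a • m) = a • f m := by
  letI := uModule k M
  letI := uModule k N
  obtain ⟨b, rfl⟩ : ∃ b, UniversalEnvelopingAlgebra.mkAlgHom k (sl2 k) b = a :=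
    RingCon.mkₐ_surjective (α := k) _ a
  induction b using TensorAlgebra.induction generalizing m with
  | algebraMap r =>
      rw [AlgHom.commutes, uSmul_def, uSmul_def, AlgHom.commutes,
        Module.algebraMap_end_apply, AlgHom.commutes, Module.algebraMap_end_apply,
        map_smul]
  | ι x =>
      have hx : UniversalEnvelopingAlgebra.mkAlgHom k (sl2 k)
          (TensorAlgebra.ι k x) = UniversalEnvelopingAlgebra.ι k x := rfl
      rw [hx, uSmul_iota, uSmul_iota, hf]
  | mul x y hx hy =>
      rw [map_mul, mul_smul, mul_smul, hx, hy]
  | add x y hx hy =>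
      rw [map_add, add_smul, add_smul, map_add, hx, hy]

variable (k)

/-- A morphism of Lie modules induces a morphism of the corresponding
`U`-modules. -/
def uHom (f : M →ₗ[k] N) (hf : ∀ (u : sl2 k) (m : M), f ⁅u, m⁆ = ⁅u, f m⁆) :
    uMod k M ⟶ uMod k N :=
  letI := uModule k M
  letI := uModule k N
  ModuleCat.ofHom
    { toFun := f
      map_add' := f.map_add
      map_smul' := fun a m => uSmul_map f hf a m }

end UModules

section ExtU

variable (k : Type) [Field k]

/-- `Ext^n_U(k, M)` where `k` is the trivial `U`-module. -/
def extU (n : ℕ) (M : ModuleCat (UEnv k)) : ModuleCat k :=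
  ((Ext k (ModuleCat (UEnv k)) n).obj (Opposite.op (uMod k k))).obj M

/-- Functoriality of `Ext^n_U(k, -)`. -/
def extUMap (n : ℕ) {M N : ModuleCat (UEnv k)} (f : M ⟶ N) :
    extU k n M ⟶ extU k n N :=
  ((Ext k (ModuleCat (UEnv k)) n).obj (Opposite.op (uMod k k))).map f

end ExtU
namespace sl2

variable (k : Type) [Field k]

/-- The Casimir-type invariant `c = h² + 4ef ∈ S`. -/
def cElt : Sg k := X 1 ^ 2 + 4 * (X 0 * X 2)

variable {k}

lemma toS_apply (w : sl2 k) :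
    toS k w = w 0 • (X 0 : Sg k) + w 1 • X 1 + w 2 • X 2 := rfl

lemma lie_X0 (u : sl2 k) :
    ⁅u, (X 0 : Sg k)⁆ = C (2 * u 1) * X 0 - C (u 2) * X 1 := by
  show actS k u (X 0) = _
  rw [actS_X, gens₀, toS_apply]
  simp only [lie_apply₀, lie_apply₁, lie_apply₂, E_apply₀, E_apply₁, E_apply₂,
    MvPolynomial.smul_eq_C_mul, map_mul, map_sub, map_add, map_neg, map_ofNat,
    map_zero, map_one]
  ring

lemma lie_X1 (u : sl2 k) :
    ⁅u, (X 1 : Sg k)⁆ = C (2 * u 2) * X 2 - C (2 * u 0) * X 0 := by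
  show actS k u (X 1) = _
  rw [actS_X, gens₁, toS_apply]
  simp only [lie_apply₀, lie_apply₁, lie_apply₂, H_apply₀, H_apply₁, H_apply₂,
    MvPolynomial.smul_eq_C_mul, map_mul, map_sub, map_add, map_neg, map_ofNat,
    map_zero, map_one]
  ring

lemma lie_X2 (u : sl2 k) :
    ⁅u, (X 2 : Sg k)⁆ = C (u 0) * X 1 - C (2 * u 1) * X 2 := by
  show actS k u (X 2) = _
  rw [actS_X, gens₂, toS_apply]
  simp only [lie_apply₀, lie_apply₁, lie_apply₂, F_apply₀, F_apply₁, F_apply₂,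
    MvPolynomial.smul_eq_C_mul, map_mul, map_sub, map_add, map_neg, map_ofNat,
    map_zero, map_one]
  ring

lemma lie_C (u : sl2 k) (r : k) : ⁅u, (C r : Sg k)⁆ = 0 := by
  show actS k u (C r) = 0
  rw [show (C r : Sg k) = algebraMap k (Sg k) r from rfl]
  exact Derivation.map_algebraMap _ _

/-- `c` is an invariant of the adjoint action. -/
lemma lie_cElt (u : sl2 k) : ⁅u, cElt k⁆ = 0 := by
  rw [cElt, sq, lie_add, lie_mul_Sg,
    show (4 : Sg k) = C (4 : k) from by rw [map_ofNat],
    lie_mul_Sg, lie_C, lie_mul_Sg, lie_X0, lie_X1, lie_X2]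
  simp only [map_mul, map_ofNat]
  ring

/-- In characteristic `p`, the `p`-th powers `e^p, h^p, f^p` are invariants. -/
lemma lie_X_pow_p (p : ℕ) [CharP k p] (u : sl2 k) (i : Fin 3) :
    ⁅u, (X i ^ p : Sg k)⁆ = 0 := by
  show actS k u (X i ^ p) = 0
  rw [Derivation.leibniz_pow, nsmul_eq_mul,
    show ((p : ℕ) : Sg k) = C ((p : ℕ) : k) from (MvPolynomial.C_eq_coe_nat p).symm,
    CharP.cast_eq_zero, map_zero, zero_mul]

end sl2
namespace sl2

variable (k : Type) [Field k]

/-- The linear map `g → S` taking prescribed values `a, b, c` on the standard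
basis `e, h, f`. -/
def lmap (a b c : Sg k) : sl2 k →ₗ[k] Sg k where
  toFun u := u 0 • a + u 1 • b + u 2 • c
  map_add' u v := by simp only [add_apply, add_smul]; abel
  map_smul' t u := by
    simp only [smul_apply, RingHom.id_apply, smul_add, mul_smul]

variable {k}

@[simp] lemma lmap_E (a b c : Sg k) : lmap k a b c (E k) = a := by
  show E k 0 • a + E k 1 • b + E k 2 • c = a
  simp

@[simp] lemma lmap_H (a b c : Sg k) : lmap k a b c (H k) = b := by
  show H k 0 • a + H k 1 • b + H k 2 • c = b
  simp

@[simp] lemma lmap_F (a b c : Sg k) : lmap k a b c (F k) = c := by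
  show F k 0 • a + F k 1 • b + F k 2 • c = c
  simp

/-- The 1-cocycle condition for a linear map `g → S`
(Chevalley–Eilenberg complex for the standard resolution of `k` over `U`). -/
def IsCocycle1 (α : sl2 k →ₗ[k] Sg k) : Prop :=
  ∀ u v : sl2 k, α ⁅u, v⁆ = ⁅u, α v⁆ - ⁅v, α u⁆

/-- The 1-coboundary condition: `α` is the differential of some `z ∈ S`. -/
def IsCoboundary1 (α : sl2 k →ₗ[k] Sg k) : Prop :=
  ∃ z : Sg k, ∀ u : sl2 k, α u = ⁅u, z⁆

/-- The 2-cocycle condition, for a `2`-cochain recorded as the triple of its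
values on `h∧f`, `e∧f`, `e∧h`. -/
def IsCocycle2 (γ : Fin 3 → Sg k) : Prop :=
  ⁅E k, γ 0⁆ + ⁅F k, γ 2⁆ = ⁅H k, γ 1⁆

/-- The 2-coboundary condition: the differential of a linear map `β : g → S` is
the `2`-cochain `u∧v ↦ u·β(v) - v·β(u) - β([u,v])`, recorded as the triple of
its values on `h∧f`, `e∧f`, `e∧h`. -/
def IsCoboundary2 (γ : Fin 3 → Sg k) : Prop :=
  ∃ β : sl2 k →ₗ[k] Sg k,
    γ 0 = ⁅H k, β (F k)⁆ - ⁅F k, β (H k)⁆ - β ⁅H k, F k⁆ ∧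
    γ 1 = ⁅E k, β (F k)⁆ - ⁅F k, β (E k)⁆ - β ⁅E k, F k⁆ ∧
    γ 2 = ⁅E k, β (H k)⁆ - ⁅H k, β (E k)⁆ - β ⁅E k, H k⁆

lemma cElt_isHomogeneous : (cElt k).IsHomogeneous 2 := by
  rw [cElt]
  apply MvPolynomial.IsHomogeneous.add
  · exact MvPolynomial.isHomogeneous_X_pow _ _
  · rw [show (4 : Sg k) = C (4 : k) from by rw [map_ofNat]]
    have h := (MvPolynomial.isHomogeneous_C (Fin 3) (4 : k)).mul
      ((MvPolynomial.isHomogeneous_X k 0).mul (MvPolynomial.isHomogeneous_X k 2))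
    simpa using h

variable (k)

/-- Multiplication by `c` as a linear map `S^{n-2} → S^n`  (`2 ≤ n`). -/
def mulC (n : ℕ) (hn : 2 ≤ n) : ↥(SD k (n - 2)) →ₗ[k] ↥(SD k n) where
  toFun s := ⟨cElt k * (s : Sg k), by
    have := (cElt_isHomogeneous (k := k)).mul (mem_SD_iff.mp s.2)
    rw [Nat.add_sub_cancel' hn] at this
    exact mem_SD_iff.mpr this⟩
  map_add' s t := by
    apply Subtype.ext
    show cElt k * ((s : Sg k) + (t : Sg k)) = cElt k * (s : Sg k) + cElt k * (t : Sg k)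
    ring
  map_smul' a s := by
    apply Subtype.ext
    show cElt k * (a • (s : Sg k)) = a • (cElt k * (s : Sg k))
    rw [mul_smul_comm]

lemma mulC_equivariant (n : ℕ) (hn : 2 ≤ n) (u : sl2 k) (s : ↥(SD k (n - 2))) :
    mulC k n hn ⁅u, s⁆ = ⁅u, mulC k n hn s⁆ := by
  apply Subtype.ext
  show cElt k * (⁅u, (s : Sg k)⁆) = ⁅u, cElt k * (s : Sg k)⁆
  rw [lie_mul_Sg, lie_cElt, zero_mul, zero_add]

/-- The defining properties of the `g`-module map `φ : S^n → S^{2n}(L(1))`: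
it kills `c·S^{n-2}` and sends `e^i h^{n-i} ↦ (-2)^{-i} x^{n+i} y^{n-i}`,
`h^n ↦ x^n y^n`, `f^i h^{n-i} ↦ 2^{-i} x^{n-i} y^{n+i}`. -/
def IsPhi (n : ℕ) (φ : ↥(SD k n) →ₗ[k] ↥(PD k (2 * n))) : Prop :=
  (∀ (u : sl2 k) (s : ↥(SD k n)), φ ⁅u, s⁆ = ⁅u, φ s⁆) ∧
  (∀ (s : ↥(SD k n)) (t : Sg k), t.IsHomogeneous (n - 2) →
      (s : Sg k) = cElt k * t → φ s = 0) ∧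
  (∀ (s : ↥(SD k n)) (i : ℕ), i ≤ n →
      (s : Sg k) = X 0 ^ i * X 1 ^ (n - i) →
      ((φ s : Snat k)) = (((-2 : k) ^ i)⁻¹) • (X 0 ^ (n + i) * X 1 ^ (n - i))) ∧
  (∀ (s : ↥(SD k n)) (i : ℕ), i ≤ n →
      (s : Sg k) = X 2 ^ i * X 1 ^ (n - i) →
      ((φ s : Snat k)) = (((2 : k) ^ i)⁻¹) • (X 0 ^ (n - i) * X 1 ^ (n + i)))


section lieAux
variable {k : Type} [Field k]

lemma lieA (u : sl2 k) (c d : ℕ) :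
    ⁅u, (X 0 ^ c * X 1 ^ d : Snat k)⁆ =
      (d : k) • (C (u 0) * (X 0 ^ (c + 1) * X 1 ^ (d - 1)) - C (u 1) * (X 0 ^ c * X 1 ^ d))
    + (c : k) • (C (u 1) * (X 0 ^ c * X 1 ^ d) + C (u 2) * (X 0 ^ (c - 1) * X 1 ^ (d + 1))) := by
  show actP k u _ = _
  rw [Derivation.leibniz, Derivation.leibniz_pow, Derivation.leibniz_pow, actP_X0, actP_X1]
  cases c with
  | zero => cases d with
    | zero => simp
    | succ d =>
      simp only [Nat.succ_sub_one, MvPolynomial.smul_eq_C_mul, smul_eq_mul, nsmul_eq_mul,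
        Nat.cast_succ, Nat.cast_zero, map_add, map_one, map_zero, map_natCast, pow_zero, Nat.zero_sub]
      ring
  | succ c => cases d with
    | zero =>
      simp only [Nat.succ_sub_one, MvPolynomial.smul_eq_C_mul, smul_eq_mul, nsmul_eq_mul,
        Nat.cast_succ, Nat.cast_zero, map_add, map_one, map_zero, map_natCast, pow_zero, Nat.zero_sub]
      ring
    | succ d =>
      simp only [Nat.succ_sub_one, MvPolynomial.smul_eq_C_mul, smul_eq_mul, nsmul_eq_mul,
        Nat.cast_succ, map_add, map_one, map_natCast]
      ring

lemma singleEq (i j a b : ℕ) :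
    (Finsupp.single (0 : Fin 2) i + Finsupp.single 1 j
      = Finsupp.single 0 a + Finsupp.single 1 b) ↔ (i = a ∧ j = b) := by
  constructor
  · intro h
    have h0 := DFunLike.congr_fun h 0
    have h1 := DFunLike.congr_fun h 1
    simp [Finsupp.single_apply] at h0 h1
    exact ⟨h0, h1⟩
  · rintro ⟨rfl, rfl⟩; rfl

lemma coeffXX (i j a b : ℕ) :
    coeff (Finsupp.single 0 a + Finsupp.single 1 b) ((X 0 : Snat k) ^ i * X 1 ^ j)
      = if i = a ∧ j = b then (1 : k) else 0 := by
  rw [X_pow_eq_monomial, X_pow_eq_monomial, monomial_mul, one_mul, coeff_monomial]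
  simp only [singleEq]

lemma finsupp2_decomp (m : Fin 2 →₀ ℕ) :
    m = Finsupp.single 0 (m 0) + Finsupp.single 1 (m 1) := by
  ext i; fin_cases i <;> simp [Finsupp.single_apply]

lemma monomial_eq2 (m : Fin 2 →₀ ℕ) (r : k) :
    (monomial m r : Snat k) = r • (X 0 ^ (m 0) * X 1 ^ (m 1)) := by
  rw [X_pow_eq_monomial, X_pow_eq_monomial, monomial_mul, one_mul,
    MvPolynomial.smul_eq_C_mul, C_mul_monomial, mul_one]
  exact congrArg (fun s => monomial s r) (finsupp2_decomp m)

lemma degree_single' (i : Fin 2) (n : ℕ) :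
    Finsupp.degree (Finsupp.single i n) = n := by
  rcases eq_or_ne n 0 with rfl | h
  · simp [Finsupp.degree]
  · exact Finsupp.degree_single i n

lemma degree2 (m : Fin 2 →₀ ℕ) : Finsupp.degree m = m 0 + m 1 := by
  conv_lhs => rw [finsupp2_decomp m]
  rw [MvPolynomial.Finsupp.degree_add', degree_single', degree_single']

lemma coeff_lie_vanish (a b : ℕ)
    (hcond : ((a : k) = -1 ∧ (b : k) = -1) ∨ (a = 0 ∧ b = 0))
    (u : sl2 k) (c d : ℕ) (hcd : c + d = a + b) :
    coeff (Finsupp.single 0 a + Finsupp.single 1 b)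
      ⁅u, (X 0 ^ c * X 1 ^ d : Snat k)⁆ = 0 := by
  rw [lieA]
  simp only [coeff_add, coeff_smul, coeff_sub, coeff_C_mul, coeffXX, smul_eq_mul]
  rcases hcond with ⟨ha, hb⟩ | ⟨rfl, rfl⟩
  · have ha0 : a ≠ 0 := by
      rintro rfl; rw [Nat.cast_zero] at ha
      exact one_ne_zero (neg_eq_zero.mp ha.symm)
    have hb0 : b ≠ 0 := by
      rintro rfl; rw [Nat.cast_zero] at hb
      exact one_ne_zero (neg_eq_zero.mp hb.symm)
    have F1 : (d : k) * (if c + 1 = a ∧ d - 1 = b then (1:k) else 0) = 0 := by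
      split_ifs with h
      · have : d = b + 1 := by omega
        rw [this]; push_cast; rw [hb]; ring
      · rw [mul_zero]
    have F2 : ((c : k) - (d : k)) * (if c = a ∧ d = b then (1:k) else 0) = 0 := by
      split_ifs with h
      · rw [h.1, h.2, ha, hb]; ring
      · rw [mul_zero]
    have F3 : (c : k) * (if c - 1 = a ∧ d + 1 = b then (1:k) else 0) = 0 := by
      split_ifs with h
      · have : c = a + 1 := by omega
        rw [this]; push_cast; rw [ha]; ring
      · rw [mul_zero]
    linear_combination u 0 * F1 + u 1 * F2 + u 2 * F3
  · have hc : c = 0 := by omega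
    have hd : d = 0 := by omega
    subst hc; subst hd
    simp

lemma lie_mem_ker_coeff (a b : ℕ)
    (hcond : ((a : k) = -1 ∧ (b : k) = -1) ∨ (a = 0 ∧ b = 0))
    (u : sl2 k) (v : Snat k) (hv : v.IsHomogeneous (a + b)) :
    coeff (Finsupp.single 0 a + Finsupp.single 1 b) ⁅u, v⁆ = 0 := by
  conv_lhs => rw [show v = _ from v.support_sum_monomial_coeff.symm]
  rw [lie_Snat_def, map_sum, MvPolynomial.coeff_sum]
  apply Finset.sum_eq_zero
  intro m hm
  rw [monomial_eq2, Derivation.map_smul, coeff_smul, smul_eq_mul]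
  have hdeg : m 0 + m 1 = a + b := by
    have := hv (MvPolynomial.mem_support_iff.mp hm)
    rw [show Finsupp.weight 1 m = Finsupp.degree m from
      (DFunLike.congr_fun (Finsupp.degree_eq_weight_one (R := ℕ)) m).symm, degree2] at this
    exact this
  rw [← lie_Snat_def, coeff_lie_vanish a b hcond u _ _ hdeg, mul_zero]

lemma mem_span_of_unit (a b : ℕ) (u : sl2 k) (c d : ℕ) (hcd : c + d = a + b)
    (r : k) (hr : r ≠ 0)
    (key : ⁅u, (X 0 ^ c * X 1 ^ d : Snat k)⁆ = r • (X 0 ^ a * X 1 ^ b)) :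
    (X 0 ^ a * X 1 ^ b : Snat k) ∈ Submodule.span k
      {m : Snat k | ∃ (u : sl2 k) (v : ↥(PD k (a + b))), m = ⁅u, (v : Snat k)⁆} := by
  have hv : (X 0 ^ c * X 1 ^ d : Snat k).IsHomogeneous (a + b) := by
    have h1 : (X 0 ^ c * X 1 ^ d : Snat k).IsHomogeneous (c + d) :=
      (MvPolynomial.isHomogeneous_X_pow _ _).mul (MvPolynomial.isHomogeneous_X_pow _ _)
    rwa [hcd] at h1
  have hgen : ⁅u, (X 0 ^ c * X 1 ^ d : Snat k)⁆ ∈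
      {m : Snat k | ∃ (u : sl2 k) (v : ↥(PD k (a + b))), m = ⁅u, (v : Snat k)⁆} :=
    ⟨u, ⟨_, mem_PD_iff.mpr hv⟩, rfl⟩
  have h2 := Submodule.smul_mem _ r⁻¹ (Submodule.subset_span hgen)
  rw [key, smul_smul, inv_mul_cancel₀ hr, one_smul] at h2
  exact h2

end lieAux
end sl2
open sl2 in
/-- In `S(L(1))`, the monomial `xᵃyᵇ` lies in
`g·S^{a+b}(L(1))` (the `k`-span of all `u·v` with `u ∈ g`,
`v ∈ S^{a+b}(L(1))`) if and only if `(a,b) ≠ (0,0)` and it is not the case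
that both `a ≡ -1 (mod p)` and `b ≡ -1 (mod p)`. -/
theorem monomial_mem_lie_span_iff
    (k : Type) [Field k] (p : ℕ) [CharP k p] (hp : 2 < p) (a b : ℕ) :
    ((X 0 ^ a * X 1 ^ b : Snat k) ∈ Submodule.span k
        {m : Snat k | ∃ (u : sl2 k) (v : ↥(PD k (a + b))), m = ⁅u, (v : Snat k)⁆})
      ↔ (¬(a = 0 ∧ b = 0) ∧ ¬(p ∣ a + 1 ∧ p ∣ b + 1)) := by
  constructor
  · intro hmem
    have notmem : ∀ (_ : ((a : k) = -1 ∧ (b : k) = -1) ∨ (a = 0 ∧ b = 0)), False := by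
      intro hcond
      have hker : Submodule.span k
          {m : Snat k | ∃ (u : sl2 k) (v : ↥(PD k (a + b))), m = ⁅u, (v : Snat k)⁆}
          ≤ LinearMap.ker (lcoeff k (Finsupp.single 0 a + Finsupp.single 1 b)) := by
        rw [Submodule.span_le]
        rintro m ⟨u, v, rfl⟩
        simp only [SetLike.mem_coe, LinearMap.mem_ker, lcoeff_apply]
        exact lie_mem_ker_coeff a b hcond u v (mem_PD_iff.mp v.2)
      have h0 := hker hmem
      rw [LinearMap.mem_ker, lcoeff_apply, coeffXX, if_pos ⟨rfl, rfl⟩] at h0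
      exact one_ne_zero h0
    refine ⟨?_, ?_⟩
    · rintro ⟨rfl, rfl⟩; exact notmem (Or.inr ⟨rfl, rfl⟩)
    · rintro ⟨h1, h2⟩
      apply notmem
      left
      constructor
      · have := (CharP.cast_eq_zero_iff k p (a + 1)).mpr h1
        push_cast at this; linear_combination this
      · have := (CharP.cast_eq_zero_iff k p (b + 1)).mpr h2
        push_cast at this; linear_combination this
  · rintro ⟨hab, hdvd⟩
    by_cases hne : (a : k) - (b : k) ≠ 0
    · refine mem_span_of_unit a b (H k) a b rfl _ hne ?_
      rw [lieA]
      simp only [H_apply₀, H_apply₁, H_apply₂, MvPolynomial.smul_eq_C_mul,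
        map_zero, map_one, map_sub]
      ring
    · push_neg at hne
      have hab' : (a : k) = (b : k) := by linear_combination hne
      by_cases ha : a = 0
      · subst ha
        have hb : b ≠ 0 := fun h => hab ⟨rfl, h⟩
        refine mem_span_of_unit 0 b (F k) 1 (b - 1) (by omega) ((0 : k) + 1) (by simp) ?_
        rw [lieA, show (1 : ℕ) - 1 = 0 from rfl, show b - 1 + 1 = b by omega]
        simp only [F_apply₀, F_apply₁, F_apply₂, MvPolynomial.smul_eq_C_mul,
          map_zero, map_one, map_add, Nat.cast_add, Nat.cast_one, Nat.cast_zero,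
          Nat.cast_ofNat]
        ring
      · have hr : (b : k) + 1 ≠ 0 := by
          intro h0
          apply hdvd
          constructor
          · rw [← CharP.cast_eq_zero_iff k p (a + 1)]
            push_cast; linear_combination hab' + h0
          · rw [← CharP.cast_eq_zero_iff k p (b + 1)]
            push_cast; linear_combination h0
        refine mem_span_of_unit a b (E k) (a - 1) (b + 1) (by omega) _ hr ?_
        rw [lieA, show a - 1 + 1 = a by omega, show b + 1 - 1 = b from rfl]
        simp only [E_apply₀, E_apply₁, E_apply₂, MvPolynomial.smul_eq_C_mul,
          map_zero, map_one, map_add, Nat.cast_add, Nat.cast_one]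
        ring
end
end

section
/- There exist elements u, v, u', v' ∈ S such that 4f·u = h^p − h·c^{(p−1)/2} = 4e·v and 4f·u' = c^{(p+1)/2} − h^{p+1} = 4e·v', and the linear maps δ, C: g → S defined by δ(e) = u, δ(h) = c^{(p−1)/2}, δ(f) = v and C(e) = u', C(h) = h^p, C(f) = v' are 1-cocycles, i.e. satisfy α([w,z]) = w·α(z) − z·α(w) for all w, z ∈ g. -/
noncomputable section
open MvPolynomial

variable (k : Type) [Field k]

section aux

lemma pow_sq_add {R : Type*} [CommRing R] (a b : R) (n : ℕ) :
    (a ^ 2 + b) ^ n =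
      a ^ (2 * n) +
        b * ∑ i ∈ Finset.range n, (n.choose i : R) * (a ^ (2 * i) * b ^ (n - 1 - i)) := by
  rw [add_pow, Finset.sum_range_succ, Finset.mul_sum, add_comm]
  congr 1
  · rw [Nat.sub_self, pow_zero, Nat.choose_self, Nat.cast_one, mul_one, mul_one, ← pow_mul]
  · apply Finset.sum_congr rfl
    intro i hi
    have h : n - i = (n - 1 - i) + 1 := by
      have := Finset.mem_range.mp hi; omega
    rw [h, pow_succ b (n - 1 - i), ← pow_mul]
    ring

namespace sl2

variable {k : Type} [Field k]

lemma lie_cElt_pow (u : sl2 k) (n : ℕ) : ⁅u, cElt k ^ n⁆ = 0 := by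
  show actS k u (cElt k ^ n) = 0
  rw [Derivation.leibniz_pow]
  have h0 : actS k u (cElt k) = 0 := lie_cElt u
  rw [h0]
  simp

lemma lie_H_X0 : ⁅H k, (X 0 : Sg k)⁆ = 2 * X 0 := by rw [lie_X0]; simp; try rfl
lemma lie_H_X1 : ⁅H k, (X 1 : Sg k)⁆ = 0 := by rw [lie_X1]; simp; try rfl
lemma lie_H_X2 : ⁅H k, (X 2 : Sg k)⁆ = -(2 * X 2) := by rw [lie_X2]; simp; try rfl
lemma lie_E_X0 : ⁅E k, (X 0 : Sg k)⁆ = 0 := by rw [lie_X0]; simp; try rfl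
lemma lie_E_X1 : ⁅E k, (X 1 : Sg k)⁆ = -(2 * X 0) := by rw [lie_X1]; simp; try rfl
lemma lie_F_X1 : ⁅F k, (X 1 : Sg k)⁆ = 2 * X 2 := by rw [lie_X1]; simp; try rfl
lemma lie_F_X2 : ⁅F k, (X 2 : Sg k)⁆ = 0 := by rw [lie_X2]; simp; try rfl

lemma lie_E_H : ⁅E k, H k⁆ = (-2 : k) • E k := by
  funext i; fin_cases i <;> simp
lemma lie_F_H : ⁅F k, H k⁆ = (2 : k) • F k := by
  funext i; fin_cases i <;> simp
lemma lie_F_E : ⁅F k, E k⁆ = (-1 : k) • H k := by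
  funext i; fin_cases i <;> simp

lemma lie_X1_pow_succ (p : ℕ) [CharP k p] (u : sl2 k) :
    ⁅u, (X 1 : Sg k) ^ (p + 1)⁆ = X 1 ^ p * ⁅u, (X 1 : Sg k)⁆ := by
  show actS k u ((X 1 : Sg k) ^ (p + 1)) = _
  rw [Derivation.leibniz_pow]
  have hc : ((p + 1 : ℕ) : Sg k) = 1 := by
    push_cast
    rw [show ((p : ℕ) : Sg k) = C ((p : ℕ) : k) from (map_natCast (C : k →+* Sg k) p).symm]
    simp [CharP.cast_eq_zero k p]
  rw [nsmul_eq_mul, hc, Nat.add_sub_cancel, one_mul, smul_eq_mul]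
  rw [lie_Sg_def]

lemma lie4 (w : sl2 k) (i : Fin 3) (q R : Sg k) (hq : 4 * (X i * q) = R) :
    4 * (⁅w, (X i : Sg k)⁆ * q) + 4 * (X i * ⁅w, q⁆) = ⁅w, R⁆ := by
  have h : ⁅w, (C (4 : k) : Sg k) * (X i * q)⁆ = ⁅w, R⁆ := by
    rw [map_ofNat, hq]
  rw [lie_mul_Sg, lie_C, lie_mul_Sg, map_ofNat] at h
  linear_combination h

set_option maxHeartbeats 1000000 in
lemma isCocycle1_of_basis (α : sl2 k →ₗ[k] Sg k)
    (h1 : 2 * α (E k) = ⁅H k, α (E k)⁆ - ⁅E k, α (H k)⁆)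
    (h2 : -(2 * α (F k)) = ⁅H k, α (F k)⁆ - ⁅F k, α (H k)⁆)
    (h3 : α (H k) = ⁅E k, α (F k)⁆ - ⁅F k, α (E k)⁆) :
    IsCocycle1 α := by
  intro w z
  rw [decomp w, decomp z]
  simp [lie_E_H, lie_H_E, lie_E_F, lie_F_E, lie_H_F, lie_F_H,
    MvPolynomial.smul_eq_C_mul] at h1 h2 h3 ⊢
  simp only [show (C (2 : k) : Sg k) = 2 from rfl]
  linear_combination (C (w 1) * C (z 0) - C (w 0) * C (z 1)) * h1 +
    (C (w 1) * C (z 2) - C (w 2) * C (z 1)) * h2 +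
    (C (w 0) * C (z 2) - C (w 2) * C (z 0)) * h3

end sl2

end aux

open sl2 in
/-- There are `u, v, u', v' ∈ S` with
`4f·u = hᵖ - h·c^{(p-1)/2} = 4e·v` and `4f·u' = c^{(p+1)/2} - h^{p+1} = 4e·v'`,
and the linear maps `δ, C : g → S` with `δ(e) = u`, `δ(h) = c^{(p-1)/2}`,
`δ(f) = v`, `C(e) = u'`, `C(h) = hᵖ`, `C(f) = v'` are 1-cocycles. -/
theorem one_cocycles_delta_C
    (k : Type) [Field k] (p : ℕ) [CharP k p] (hp : 2 < p) :
    ∃ u v u' v' : Sg k,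
      (4 * (X 2 * u) = X 1 ^ p - X 1 * cElt k ^ ((p - 1) / 2) ∧
       4 * (X 0 * v) = X 1 ^ p - X 1 * cElt k ^ ((p - 1) / 2)) ∧
      (4 * (X 2 * u') = cElt k ^ ((p + 1) / 2) - X 1 ^ (p + 1) ∧
       4 * (X 0 * v') = cElt k ^ ((p + 1) / 2) - X 1 ^ (p + 1)) ∧
      IsCocycle1 (lmap k u (cElt k ^ ((p - 1) / 2)) v) ∧
      IsCocycle1 (lmap k u' (X 1 ^ p) v') := by
  have hprime : p.Prime := (CharP.char_is_prime_or_zero k p).resolve_right (by omega)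
  obtain ⟨t, ht⟩ := hprime.odd_of_ne_two (by omega)
  have hm : 2 * ((p - 1) / 2) + 1 = p := by omega
  have hm' : 2 * ((p + 1) / 2) = p + 1 := by omega
  set m := (p - 1) / 2 with hmdef
  set m' := (p + 1) / 2 with hmdef'
  set S1 : Sg k := ∑ i ∈ Finset.range m,
    (m.choose i : Sg k) * (X 1 ^ (2 * i) * (4 * (X 0 * X 2)) ^ (m - 1 - i)) with hS1
  set S2 : Sg k := ∑ i ∈ Finset.range m',
    (m'.choose i : Sg k) * (X 1 ^ (2 * i) * (4 * (X 0 * X 2)) ^ (m' - 1 - i)) with hS2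
  have hc1 : cElt k ^ m = X 1 ^ (2 * m) + 4 * (X 0 * X 2) * S1 := by
    rw [show cElt k = X 1 ^ 2 + 4 * (X 0 * X 2) from rfl, hS1]
    exact pow_sq_add _ _ _
  have hc2 : cElt k ^ m' = X 1 ^ (2 * m') + 4 * (X 0 * X 2) * S2 := by
    rw [show cElt k = X 1 ^ 2 + 4 * (X 0 * X 2) from rfl, hS2]
    exact pow_sq_add _ _ _
  set u : Sg k := -(X 0 * (X 1 * S1)) with hudef
  set v : Sg k := -(X 2 * (X 1 * S1)) with hvdef
  set u' : Sg k := X 0 * S2 with hudef'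
  set v' : Sg k := X 2 * S2 with hvdef'
  have hu : 4 * (X 2 * u) = X 1 ^ p - X 1 * cElt k ^ m := by
    rw [hc1, show (X 1 : Sg k) ^ p = X 1 ^ (2 * m + 1) by rw [hm], hudef]
    ring
  have hv : 4 * (X 0 * v) = X 1 ^ p - X 1 * cElt k ^ m := by
    rw [hc1, show (X 1 : Sg k) ^ p = X 1 ^ (2 * m + 1) by rw [hm], hvdef]
    ring
  have hu' : 4 * (X 2 * u') = cElt k ^ m' - X 1 ^ (p + 1) := by
    rw [hc2, show (X 1 : Sg k) ^ (p + 1) = X 1 ^ (2 * m') by rw [hm'], hudef']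
    ring
  have hv' : 4 * (X 0 * v') = cElt k ^ m' - X 1 ^ (p + 1) := by
    rw [hc2, show (X 1 : Sg k) ^ (p + 1) = X 1 ^ (2 * m') by rw [hm'], hvdef']
    ring
  have h2k : (2 : k) ≠ 0 := by
    intro h
    have h2 : ((2 : ℕ) : k) = 0 := by exact_mod_cast h
    have hd := (CharP.cast_eq_zero_iff k p 2).mp h2
    have := Nat.le_of_dvd (by norm_num) hd
    omega
  have h2S : (2 : Sg k) ≠ 0 := by
    rw [show (2 : Sg k) = C (2 : k) from rfl]
    simpa using h2k
  have hX0 : (X 0 : Sg k) ≠ 0 := MvPolynomial.X_ne_zero 0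
  have hX2 : (X 2 : Sg k) ≠ 0 := MvPolynomial.X_ne_zero 2
  -- the bracket identities for `u, v`
  have d1 := lie4 (H k) 2 u _ hu
  rw [lie_H_X2, lie_sub, lie_X_pow_p p, lie_mul_Sg, lie_H_X1, lie_cElt_pow] at d1
  have hHu : ⁅H k, u⁆ = 2 * u :=
    mul_left_cancel₀ (mul_ne_zero h2S (mul_ne_zero h2S hX2)) (by linear_combination d1)
  have d2 := lie4 (H k) 0 v _ hv
  rw [lie_H_X0, lie_sub, lie_X_pow_p p, lie_mul_Sg, lie_H_X1, lie_cElt_pow] at d2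
  have hHv : ⁅H k, v⁆ = -(2 * v) :=
    mul_left_cancel₀ (mul_ne_zero h2S (mul_ne_zero h2S hX0)) (by linear_combination d2)
  have d3 := lie4 (E k) 0 v _ hv
  rw [lie_E_X0, lie_sub, lie_X_pow_p p, lie_mul_Sg, lie_E_X1, lie_cElt_pow] at d3
  have hEv : 2 * ⁅E k, v⁆ = cElt k ^ m :=
    mul_left_cancel₀ (mul_ne_zero h2S hX0) (by linear_combination d3)
  have d4 := lie4 (F k) 2 u _ hu
  rw [lie_F_X2, lie_sub, lie_X_pow_p p, lie_mul_Sg, lie_F_X1, lie_cElt_pow] at d4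
  have hFu : 2 * ⁅F k, u⁆ = -(cElt k ^ m) :=
    mul_left_cancel₀ (mul_ne_zero h2S hX2) (by linear_combination d4)
  -- the bracket identities for `u', v'`
  have d5 := lie4 (H k) 2 u' _ hu'
  rw [lie_H_X2, lie_sub, lie_cElt_pow, lie_X1_pow_succ p, lie_H_X1] at d5
  have hHu' : ⁅H k, u'⁆ = 2 * u' :=
    mul_left_cancel₀ (mul_ne_zero h2S (mul_ne_zero h2S hX2)) (by linear_combination d5)
  have d6 := lie4 (H k) 0 v' _ hv'
  rw [lie_H_X0, lie_sub, lie_cElt_pow, lie_X1_pow_succ p, lie_H_X1] at d6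
  have hHv' : ⁅H k, v'⁆ = -(2 * v') :=
    mul_left_cancel₀ (mul_ne_zero h2S (mul_ne_zero h2S hX0)) (by linear_combination d6)
  have d7 := lie4 (E k) 0 v' _ hv'
  rw [lie_E_X0, lie_sub, lie_cElt_pow, lie_X1_pow_succ p, lie_E_X1] at d7
  have hEv' : 2 * ⁅E k, v'⁆ = X 1 ^ p :=
    mul_left_cancel₀ (mul_ne_zero h2S hX0) (by linear_combination d7)
  have d8 := lie4 (F k) 2 u' _ hu'
  rw [lie_F_X2, lie_sub, lie_cElt_pow, lie_X1_pow_succ p, lie_F_X1] at d8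
  have hFu' : 2 * ⁅F k, u'⁆ = -(X 1 ^ p) :=
    mul_left_cancel₀ (mul_ne_zero h2S hX2) (by linear_combination d8)
  refine ⟨u, v, u', v', ⟨hu, hv⟩, ⟨hu', hv'⟩, ?_, ?_⟩
  · apply isCocycle1_of_basis
    · simp only [lmap_E, lmap_H]
      rw [hHu, lie_cElt_pow]
      ring
    · simp only [lmap_F, lmap_H]
      rw [hHv, lie_cElt_pow]
      ring
    · simp only [lmap_H, lmap_E, lmap_F]
      refine mul_left_cancel₀ h2S ?_
      linear_combination hFu - hEv
  · apply isCocycle1_of_basis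
    · simp only [lmap_E, lmap_H]
      rw [hHu', lie_X_pow_p p]
      ring
    · simp only [lmap_F, lmap_H]
      rw [hHv', lie_X_pow_p p]
      ring
    · simp only [lmap_H, lmap_E, lmap_F]
      refine mul_left_cancel₀ h2S ?_
      linear_combination hFu' - hEv'
end
end

section
/- Each of the following linear maps α: Λ²g → S is a 2-cocycle, i.e. satisfies e·α(h∧f) + f·α(e∧h) = h·α(e∧f): (i) R_e given by α(e∧h) = f^{p−1} and α(h∧f) = α(e∧f) = 0; (ii) R_h given by α(h∧f) = f h^{p−2}, α(e∧h) = e h^{p−2}, α(e∧f) = 0; (iii) R_f given by α(h∧f) = e^{p−1} and α(e∧f) = α(e∧h) = 0; (iv) T given by α(h∧f) = f h^{p−1}, α(e∧h) = e h^{p−1}, α(e∧f) = 0. -/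
noncomputable section
open MvPolynomial

variable (k : Type) [Field k]

namespace sl2

variable {k : Type} [Field k]

lemma lie_pow' (u : sl2 k) (s : Sg k) (n : ℕ) :
    ⁅u, s ^ n⁆ = n • (s ^ (n - 1) * ⁅u, s⁆) := by
  show actS k u (s ^ n) = n • (s ^ (n - 1) * actS k u s)
  rw [Derivation.leibniz_pow]
  simp [smul_eq_mul]

lemma lie_E_X2 : ⁅E k, (X 2 : Sg k)⁆ = X 1 := by
  rw [lie_X2]; simp
lemma lie_F_X0 : ⁅F k, (X 0 : Sg k)⁆ = -X 1 := by
  rw [lie_X0]; simp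
end sl2

open sl2 in
/-- The 2-cochains `R_e, R_h, R_f, T` (recorded as triples of
values on `h∧f`, `e∧f`, `e∧h`) are 2-cocycles. -/
theorem two_cocycles_Re_Rh_Rf_T
    (k : Type) [Field k] (p : ℕ) [CharP k p] (hp : 2 < p) :
    IsCocycle2 (![0, 0, X 2 ^ (p - 1)] : Fin 3 → Sg k) ∧
    IsCocycle2 (![X 2 * X 1 ^ (p - 2), 0, X 0 * X 1 ^ (p - 2)] : Fin 3 → Sg k) ∧
    IsCocycle2 (![X 0 ^ (p - 1), 0, 0] : Fin 3 → Sg k) ∧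
    IsCocycle2 (![X 2 * X 1 ^ (p - 1), 0, X 0 * X 1 ^ (p - 1)] : Fin 3 → Sg k) := by
  refine ⟨?_, ?_, ?_, ?_⟩ <;>
  · show _ + _ = _
    simp only [Matrix.cons_val_zero, Matrix.cons_val_one, Matrix.head_cons,
      Matrix.cons_val_two, Matrix.tail_cons, lie_zero,
      lie_mul_Sg, lie_pow', lie_E_X0, lie_E_X1, lie_E_X2,
      lie_F_X0, lie_F_X1, lie_F_X2, mul_zero, smul_zero, zero_mul, add_zero,
      smul_eq_mul, nsmul_eq_mul]
    try ring
end
end
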